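/- Let K ∈ ℝ, N ∈ (1,∞) and let h be an MCP(K,N) density. Then: (i) supp h is a closed interval; (ii) h is bounded above on every compact subset of supp h; (iii) h is positive and locally Lipschitz on the interior of supp h; (iv) there exists a function h̃ : ℝ → [0,∞), agreeing with h everywhere except possibly at the (at most two) endpoints of supp h, such that h̃ is continuous on supp h. -/

import Mathlib

open MeasureTheory Filter Set

noncomputable def sOf (κ θ : ℝ) : ℝ :=
  if 0 < κ then Real.sin (Real.sqrt κ * θ) / Real.sqrt κ
  else if κ = 0 then θ
  else Real.sinh (Real.sqrt (-κ) * θ) / Real.sqrt (-κ)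

noncomputable def sigmaCoeff (K N t θ : ℝ) : ENNReal :=
  if Real.pi ^ 2 * (N - 1) ≤ K * θ ^ 2 then ⊤
  else if θ = 0 then ENNReal.ofReal t
  else ENNReal.ofReal (sOf (K / (N - 1)) (t * θ) / sOf (K / (N - 1)) θ)

noncomputable def densSupport (h : ℝ → ℝ) : Set ℝ :=
  {x : ℝ | ∀ U : Set ℝ, IsOpen U → x ∈ U →
    0 < (volume.withDensity fun y => ENNReal.ofReal (h y)) U}

def IsMCPDensity (K N : ℝ) (h : ℝ → ℝ) : Prop :=
  (∀ x, 0 ≤ h x) ∧ MeasureTheory.LocallyIntegrable h volume ∧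
  ∀ x₀ ∈ densSupport h, ∀ x₁ ∈ densSupport h, ∀ t ∈ Set.Icc (0:ℝ) 1,
    sigmaCoeff K N (1 - t) (|x₁ - x₀|) ^ (N - 1) * ENNReal.ofReal (h x₀) ≤
      ENNReal.ofReal (h ((1 - t) * x₀ + t * x₁))

/-!
Write `s := s_{K/(N-1)}`. Unfolding `σ`, the MCP condition on a segment `[x₀, x₁]` of the support
with `h x₀ > 0` reads `s(|x₁ - z|)^(N-1) · h x₀ ≤ s(|x₁ - x₀|)^(N-1) · h z` for `z` between
`x₀` and `x₁`, and forces `K/(N-1) · |x₁ - x₀|² < π²`. Points of positive density are dense in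
the support, so `h` is positive strictly between any two support points: the support is an
interval and `h > 0` on its interior. Comparing with the midpoint bounds `h` on compact
subintervals. In other words `z ↦ h z / s(|c - z|)^(N-1)` is monotone towards every support
point `c`; anchors on both sides of a point bound the increase and the decrease of `h` by smooth
weights, hence `h` is locally Lipschitz, and at an endpoint the monotone ratio has a limit, which
is the value of the continuous modification.
-/

open Topology

lemma exists_Icc_subset_of_mem_interior {s : Set ℝ} {x : ℝ} (hx : x ∈ interior s) :
    ∃ ε > 0, Icc (x - ε) (x + ε) ⊆ s := by
  obtain ⟨ε, hε, hsub⟩ := Metric.nhds_basis_closedBall.mem_iff.1 (mem_interior_iff_mem_nhds.1 hx)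
  exact ⟨ε, hε, Real.closedBall_eq_Icc ▸ hsub⟩

lemma Set.OrdConnected.subset_closure_interior {s : Set ℝ} (hs : s.OrdConnected)
    (hnt : s.Nontrivial) : s ⊆ closure (interior s) := by
  obtain ⟨p, hp, q, hq, hpq⟩ := hnt
  have hne : (interior s).Nonempty :=
    (nonempty_Ioo.2 (min_lt_max.2 hpq)).mono (interior_maximal
      (Ioo_subset_Icc_self.trans (hs.uIcc_subset hp hq)) isOpen_Ioo)
  rw [(hs.convex (𝕜 := ℝ)).closure_interior_eq_closure_of_nonempty_interior hne]
  exact subset_closure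

lemma exists_lipschitzOnWith_of_mul_le_mul {f A B : ℝ → ℝ} {s : Set ℝ} {L : NNReal} {m M : ℝ}
    (hm : 0 < m) (hA : LipschitzOnWith L A s) (hB : LipschitzOnWith L B s)
    (hAm : ∀ x ∈ s, m ≤ A x) (hBm : ∀ x ∈ s, m ≤ B x) (hf : ∀ x ∈ s, 0 ≤ f x ∧ f x ≤ M)
    (hAf : ∀ x ∈ s, ∀ y ∈ s, x ≤ y → A y * f x ≤ A x * f y)
    (hBf : ∀ x ∈ s, ∀ y ∈ s, x ≤ y → B x * f y ≤ B y * f x) :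
    ∃ K, LipschitzOnWith K f s := by
  -- `A` limits how fast `f` can decrease, `B` how fast it can increase
  have step : ∀ x ∈ s, ∀ y ∈ s, ∀ W W' : ℝ, m ≤ W → dist W' W ≤ L * dist x y →
      W * f x ≤ W' * f y → f x ≤ f y + L * M / m * dist x y := by
    intro x hx y hy W W' hW hWW' hfW
    rcases le_total (f x) (f y) with hxy | hyx
    · have hM : 0 ≤ M := (hf x hx).1.trans (hf x hx).2
      exact le_add_of_le_of_nonneg hxy (by positivity)
    have hdiff : m * (f x - f y) ≤ L * dist x y * M := by
      rw [Real.dist_eq] at hWW'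
      nlinarith [abs_le.1 hWW', hf y hy, dist_nonneg (x := x) (y := y)]
    rw [← sub_le_iff_le_add', div_mul_eq_mul_div, le_div_iff₀ hm]
    linarith
  refine ⟨_, LipschitzOnWith.of_le_add_mul' (L * M / m) fun x hx y hy => ?_⟩
  rcases le_total x y with hxy | hyx
  · exact step x hx y hy _ _ (hAm y hy) (hA.dist_le_mul x hx y hy) (hAf x hx y hy hxy)
  · exact step x hx y hy _ _ (hBm y hy) (hB.dist_le_mul x hx y hy) (hBf y hy x hx hyx)

lemma exists_tendsto_nhdsGT_of_monotoneOn_div {f A : ℝ → ℝ} {a b : ℝ} (hab : a < b)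
    (hf : ∀ z ∈ Ioo a b, 0 ≤ f z) (hA : ∀ z ∈ Ioo a b, 0 < A z) (hAa : ContinuousAt A a)
    (hmono : MonotoneOn (fun z => f z / A z) (Ioo a b)) : ∃ L, Tendsto f (𝓝[>] a) (𝓝 L) := by
  have hlim := hmono.tendsto_nhdsWithin_Ioo_right (nonempty_Ioo.2 hab)
    ⟨0, forall_mem_image.2 fun z hz => div_nonneg (hf z hz) (hA z hz).le⟩
  refine ⟨_, (hlim.mul (hAa.tendsto.mono_left nhdsWithin_le_nhds)).congr' ?_⟩
  filter_upwards [Ioo_mem_nhdsGT hab] with z hz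
  exact div_mul_cancel₀ _ (hA z hz).ne'

lemma exists_tendsto_nhdsLT_of_antitoneOn_div {f A : ℝ → ℝ} {a b : ℝ} (hab : a < b)
    (hf : ∀ z ∈ Ioo a b, 0 ≤ f z) (hA : ∀ z ∈ Ioo a b, 0 < A z) (hAb : ContinuousAt A b)
    (hanti : AntitoneOn (fun z => f z / A z) (Ioo a b)) : ∃ L, Tendsto f (𝓝[<] b) (𝓝 L) := by
  have hlim := hanti.tendsto_nhdsWithin_Ioo_left (nonempty_Ioo.2 hab)
    ⟨0, forall_mem_image.2 fun z hz => div_nonneg (hf z hz) (hA z hz).le⟩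
  refine ⟨_, (hlim.mul (hAb.tendsto.mono_left nhdsWithin_le_nhds)).congr' ?_⟩
  filter_upwards [Ioo_mem_nhdsLT hab] with z hz
  exact div_mul_cancel₀ _ (hA z hz).ne'

lemma sOf_zero (κ : ℝ) : sOf κ 0 = 0 := by
  unfold sOf
  split_ifs <;> simp

lemma contDiff_sOf (κ : ℝ) {n : WithTop ℕ∞} : ContDiff ℝ n (sOf κ) := by
  unfold sOf
  split_ifs <;> fun_prop

lemma sOf_pos {κ θ : ℝ} (hθ : 0 < θ) (hκθ : κ * θ ^ 2 < Real.pi ^ 2) : 0 < sOf κ θ := by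
  unfold sOf
  split_ifs with hκ hκ'
  · have hsqrt : 0 < √κ := Real.sqrt_pos.2 hκ
    have hlt : √κ * θ < Real.pi :=
      lt_of_pow_lt_pow_left₀ 2 Real.pi_pos.le (by rwa [mul_pow, Real.sq_sqrt hκ.le])
    exact div_pos (Real.sin_pos_of_pos_of_lt_pi (by positivity) hlt) hsqrt
  · exact hθ
  · have hsqrt : 0 < √(-κ) := Real.sqrt_pos.2 (by contrapose! hκ'; linarith)
    exact div_pos (Real.sinh_pos_iff.2 (by positivity)) hsqrt

lemma sOf_nonneg {κ θ : ℝ} (hθ : 0 ≤ θ) (hκθ : κ * θ ^ 2 < Real.pi ^ 2) : 0 ≤ sOf κ θ := by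
  rcases hθ.eq_or_lt with rfl | hθ
  · rw [sOf_zero]
  · exact (sOf_pos hθ hκθ).le

lemma mul_sq_lt_pi_sq_of_le {κ θ θ' : ℝ} (hθ' : 0 ≤ θ') (hle : θ' ≤ θ)
    (hκθ : κ * θ ^ 2 < Real.pi ^ 2) :
    κ * θ' ^ 2 < Real.pi ^ 2 := by
  rcases le_or_gt κ 0 with hκ | hκ
  · nlinarith [Real.pi_pos]
  · nlinarith [pow_le_pow_left₀ hθ' hle 2]

lemma contDiffAt_sOf_abs_sub_rpow {κ p c w : ℝ} (hw : w ≠ c) (hpos : 0 < sOf κ |c - w|) :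
    ContDiffAt ℝ 1 (fun z => sOf κ |c - z| ^ p) w :=
  ((contDiff_sOf κ).contDiffAt.comp w
    ((contDiffAt_abs (sub_ne_zero.2 hw.symm)).comp w (contDiffAt_const.sub contDiffAt_id))
    ).rpow_const_of_ne hpos.ne'

lemma sigmaCoeff_of_le {K N t θ : ℝ} (hθ : Real.pi ^ 2 * (N - 1) ≤ K * θ ^ 2) :
    sigmaCoeff K N t θ = ⊤ := by
  simp [sigmaCoeff, hθ]

lemma sigmaCoeff_rpow {K N t θ : ℝ} (hN : 1 < N) (hθ : 0 < θ)
    (hKθ : K / (N - 1) * θ ^ 2 < Real.pi ^ 2) (ht : t ∈ Icc (0 : ℝ) 1) :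
    sigmaCoeff K N t θ ^ (N - 1) =
      ENNReal.ofReal (sOf (K / (N - 1)) (t * θ) ^ (N - 1) / sOf (K / (N - 1)) θ ^ (N - 1)) := by
  have hK : ¬ Real.pi ^ 2 * (N - 1) ≤ K * θ ^ 2 := by
    rw [div_mul_eq_mul_div, div_lt_iff₀ (by linarith)] at hKθ
    linarith
  have htθ : 0 ≤ t * θ := mul_nonneg ht.1 hθ.le
  have hnum := sOf_nonneg htθ (mul_sq_lt_pi_sq_of_le htθ (by nlinarith [ht.2]) hKθ)
  rw [sigmaCoeff, if_neg hK, if_neg hθ.ne', ENNReal.ofReal_rpow_of_nonneg _ (by linarith),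
    Real.div_rpow hnum (sOf_pos hθ hKθ).le]
  exact div_nonneg hnum (sOf_pos hθ hKθ).le

lemma densSupport_eq_support (h : ℝ → ℝ) :
    densSupport h = (volume.withDensity fun y => ENNReal.ofReal (h y)).support := by
  ext x
  simp [densSupport, Measure.support_eq_forall_isOpen, imp.swap]

lemma isClosed_densSupport (h : ℝ → ℝ) : IsClosed (densSupport h) :=
  densSupport_eq_support h ▸ Measure.isClosed_support

lemma withDensity_ofReal_pos {h : ℝ → ℝ} (hmeas : AEMeasurable h) {U : Set ℝ} (hU : IsOpen U)
    (hne : U.Nonempty) (hpos : ∀ y ∈ U, 0 < h y) :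
    0 < volume.withDensity (fun y => ENNReal.ofReal (h y)) U := by
  rw [pos_iff_ne_zero, Ne, withDensity_apply_eq_zero' hmeas.ennreal_ofReal]
  have hU' : {y | ENNReal.ofReal (h y) ≠ 0} ∩ U = U :=
    inter_eq_right.2 fun y hy => by simpa using hpos y hy
  rw [hU']
  exact (hU.measure_pos volume hne).ne'

namespace IsMCPDensity

variable {K N : ℝ} {h : ℝ → ℝ} {x₀ x₁ z : ℝ}

lemma mul_sq_lt_pi_sq (hN : 1 < N) (hh : IsMCPDensity K N h) (hx₀ : x₀ ∈ densSupport h)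
    (hx₁ : x₁ ∈ densSupport h) (hpos : 0 < h x₀) :
    K / (N - 1) * |x₁ - x₀| ^ 2 < Real.pi ^ 2 := by
  by_contra hK
  rw [not_lt, div_mul_eq_mul_div, le_div_iff₀ (by linarith)] at hK
  have hmcp := hh.2.2 x₀ hx₀ x₁ hx₁ 0 (left_mem_Icc.2 zero_le_one)
  rw [sigmaCoeff_of_le hK, ENNReal.top_rpow_of_pos (by linarith),
    ENNReal.top_mul (ENNReal.ofReal_pos.2 hpos).ne'] at hmcp
  exact ENNReal.ofReal_ne_top (top_le_iff.1 hmcp)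

lemma sOf_rpow_mul_le (hN : 1 < N) (hh : IsMCPDensity K N h) (hx₀ : x₀ ∈ densSupport h)
    (hx₁ : x₁ ∈ densSupport h) (hpos : 0 < h x₀) (hz : z ∈ uIcc x₀ x₁) :
    sOf (K / (N - 1)) |x₁ - z| ^ (N - 1) * h x₀ ≤
      sOf (K / (N - 1)) |x₁ - x₀| ^ (N - 1) * h z := by
  rw [← segment_eq_uIcc, segment_eq_image] at hz
  obtain ⟨t, ht, rfl⟩ := hz
  simp only [smul_eq_mul]
  have hdist : |x₁ - ((1 - t) * x₀ + t * x₁)| = (1 - t) * |x₁ - x₀| := by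
    rw [show x₁ - ((1 - t) * x₀ + t * x₁) = (1 - t) * (x₁ - x₀) by ring, abs_mul,
      abs_of_nonneg (by linarith [ht.2])]
  rw [hdist]
  have hκθ := hh.mul_sq_lt_pi_sq hN hx₀ hx₁ hpos
  set θ := |x₁ - x₀|
  rcases (show 0 ≤ θ from abs_nonneg _).eq_or_lt with hθ | hθ
  · rw [← hθ]
    simp [sOf_zero, Real.zero_rpow (by linarith : N - 1 ≠ 0)]
  have htθ : 0 ≤ (1 - t) * θ := mul_nonneg (by linarith [ht.2]) hθ.le
  have hnum : 0 ≤ sOf (K / (N - 1)) ((1 - t) * θ) ^ (N - 1) :=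
    Real.rpow_nonneg (sOf_nonneg htθ (mul_sq_lt_pi_sq_of_le htθ (by nlinarith [ht.1]) hκθ)) _
  have hden : 0 < sOf (K / (N - 1)) θ ^ (N - 1) := Real.rpow_pos_of_pos (sOf_pos hθ hκθ) _
  have hmcp := hh.2.2 x₀ hx₀ x₁ hx₁ t ht
  rw [sigmaCoeff_rpow hN hθ hκθ ⟨by linarith [ht.2], by linarith [ht.1]⟩,
    ← ENNReal.ofReal_mul (div_nonneg hnum hden.le), ENNReal.ofReal_le_ofReal_iff (hh.1 _),
    div_mul_eq_mul_div, div_le_iff₀ hden] at hmcp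
  linarith

lemma sOf_rpow_pos (hN : 1 < N) (hh : IsMCPDensity K N h) (hx₀ : x₀ ∈ densSupport h)
    (hx₁ : x₁ ∈ densSupport h) (hpos : 0 < h x₀) (hz : z ∈ uIcc x₀ x₁) (hzx₁ : z ≠ x₁) :
    0 < sOf (K / (N - 1)) |x₁ - z| ^ (N - 1) := by
  have hdist : 0 < |x₁ - z| := abs_pos.2 (sub_ne_zero.2 hzx₁.symm)
  exact Real.rpow_pos_of_pos (sOf_pos hdist (mul_sq_lt_pi_sq_of_le hdist.le
    (abs_sub_right_of_mem_uIcc hz) (hh.mul_sq_lt_pi_sq hN hx₀ hx₁ hpos))) _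

lemma pos_of_mem_uIcc (hN : 1 < N) (hh : IsMCPDensity K N h) (hx₀ : x₀ ∈ densSupport h)
    (hx₁ : x₁ ∈ densSupport h) (hpos : 0 < h x₀) (hz : z ∈ uIcc x₀ x₁) (hzx₁ : z ≠ x₁) :
    0 < h z :=
  pos_of_mul_pos_right ((mul_pos (hh.sOf_rpow_pos hN hx₀ hx₁ hpos hz hzx₁) hpos).trans_le
    (hh.sOf_rpow_mul_le hN hx₀ hx₁ hpos hz))
    (Real.rpow_nonneg (sOf_nonneg (abs_nonneg _) (hh.mul_sq_lt_pi_sq hN hx₀ hx₁ hpos)) _)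

lemma exists_pos_near (hh : IsMCPDensity K N h) {x ε : ℝ} (hx : x ∈ densSupport h) (hε : 0 < ε) :
    ∃ y ∈ densSupport h, |y - x| < ε ∧ 0 < h y := by
  set μ := volume.withDensity fun y => ENNReal.ofReal (h y)
  have hball : 0 < μ (Metric.ball x ε) := by
    rw [densSupport_eq_support, Measure.support_eq_forall_isOpen] at hx
    exact hx _ (Metric.mem_ball_self hε) Metric.isOpen_ball
  have hcompl : μ (densSupport h)ᶜ = 0 := by
    rw [densSupport_eq_support]
    exact Measure.measure_compl_support
  have hinter : μ (Metric.ball x ε ∩ densSupport h) ≠ 0 := by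
    intro h0
    refine hball.ne' (measure_mono_null (fun y hy => ?_) (measure_union_null h0 hcompl))
    by_cases hyS : y ∈ densSupport h
    exacts [Or.inl ⟨hy, hyS⟩, Or.inr hyS]
  rw [Ne, withDensity_apply_eq_zero' hh.2.1.aestronglyMeasurable.aemeasurable.ennreal_ofReal]
    at hinter
  obtain ⟨y, hy, hyx, hyS⟩ := nonempty_of_measure_ne_zero hinter
  exact ⟨y, hyS, by simpa [Real.dist_eq] using hyx, by simpa using hy⟩

lemma pos_of_mem_Ioo (hN : 1 < N) (hh : IsMCPDensity K N h) {a b : ℝ}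
    (ha : a ∈ densSupport h) (hb : b ∈ densSupport h) (hz : z ∈ Ioo a b) : 0 < h z := by
  obtain ⟨y, hy, hya, hpos⟩ := hh.exists_pos_near ha (sub_pos.2 hz.1)
  have hyz : y < z := by linarith [(abs_lt.1 hya).2]
  exact hh.pos_of_mem_uIcc hN hy hb hpos (Icc_subset_uIcc ⟨hyz.le, hz.2.le⟩) hz.2.ne

lemma ordConnected_densSupport (hN : 1 < N) (hh : IsMCPDensity K N h) :
    (densSupport h).OrdConnected := by
  refine ⟨fun a ha b hb z hz => ?_⟩
  rcases hz.1.eq_or_lt with rfl | haz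
  · exact ha
  rcases hz.2.eq_or_lt with rfl | hzb
  · exact hb
  intro U hU hzU
  refine (withDensity_ofReal_pos hh.2.1.aestronglyMeasurable.aemeasurable (hU.inter isOpen_Ioo)
    ⟨z, hzU, haz, hzb⟩ fun y hy => hh.pos_of_mem_Ioo hN ha hb hy.2).trans_le
    (measure_mono inter_subset_left)

lemma pos_of_mem_interior (hN : 1 < N) (hh : IsMCPDensity K N h) {x : ℝ}
    (hx : x ∈ interior (densSupport h)) : 0 < h x := by
  obtain ⟨ε, hε, hsub⟩ := exists_Icc_subset_of_mem_interior hx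
  exact hh.pos_of_mem_Ioo hN (hsub ⟨le_rfl, by linarith⟩) (hsub ⟨by linarith, le_rfl⟩)
    ⟨by linarith, by linarith⟩

lemma bddAbove_image_Icc (hN : 1 < N) (hh : IsMCPDensity K N h) {a b : ℝ}
    (ha : a ∈ densSupport h) (hb : b ∈ densSupport h) : BddAbove (h '' Icc a b) := by
  rcases le_or_gt b a with hba | hab
  · exact ((subsingleton_Icc_of_ge hba).image h).finite.bddAbove
  -- compare `w` with the midpoint `m`, anchoring the MCP inequality at the endpoint beyond `m`
  set κ := K / (N - 1)
  set m := (a + b) / 2 with hm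
  obtain ⟨W, hW⟩ : BddAbove ((fun θ => sOf κ θ ^ (N - 1)) '' Icc 0 (b - a)) :=
    isCompact_Icc.bddAbove_image
      ((contDiff_sOf κ (n := 0)).continuous.rpow_const fun _ => Or.inr (by linarith)).continuousOn
  refine ⟨max 0 (W * h m / sOf κ ((b - a) / 2) ^ (N - 1)), ?_⟩
  rintro _ ⟨w, hw, rfl⟩
  rcases (hh.1 w).eq_or_lt with hw0 | hwpos
  · exact hw0 ▸ le_max_left _ _
  refine le_max_of_le_right ?_
  have hwS : w ∈ densSupport h := (hh.ordConnected_densSupport hN).out ha hb hw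
  have key : ∀ c ∈ densSupport h, |c - m| = (b - a) / 2 → |c - w| ≤ b - a → m ∈ uIcc w c →
      h w ≤ W * h m / sOf κ ((b - a) / 2) ^ (N - 1) := by
    intro c hc hcm hcw hmc
    have hd : 0 < sOf κ ((b - a) / 2) ^ (N - 1) := Real.rpow_pos_of_pos (sOf_pos (by linarith)
      (mul_sq_lt_pi_sq_of_le (by linarith) (hcm ▸ abs_sub_right_of_mem_uIcc hmc)
        (hh.mul_sq_lt_pi_sq hN hwS hc hwpos))) _
    have hmcp := hh.sOf_rpow_mul_le hN hwS hc hwpos hmc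
    rw [hcm] at hmcp
    rw [le_div_iff₀ hd, mul_comm]
    exact hmcp.trans (mul_le_mul_of_nonneg_right
      (hW (mem_image_of_mem _ ⟨abs_nonneg _, hcw⟩)) (hh.1 m))
  rcases le_total m w with hmw | hwm
  · exact key a ha (by rw [abs_of_neg (by linarith)]; linarith)
      (by rw [abs_of_nonpos (by linarith [hw.1])]; linarith [hw.2])
      (by rw [uIcc_comm]; exact Icc_subset_uIcc ⟨by linarith, hmw⟩)
  · exact key b hb (by rw [abs_of_pos (by linarith)]; linarith)
      (by rw [abs_of_nonneg (by linarith [hw.2])]; linarith [hw.1])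
      (Icc_subset_uIcc ⟨hwm, by linarith⟩)

lemma bddAbove_image_of_isCompact (hN : 1 < N) (hh : IsMCPDensity K N h) {C : Set ℝ}
    (hC : IsCompact C) (hCS : C ⊆ densSupport h) : BddAbove (h '' C) := by
  rcases C.eq_empty_or_nonempty with rfl | hne
  · simp
  exact (hh.bddAbove_image_Icc hN (hCS (hC.sInf_mem hne)) (hCS (hC.sSup_mem hne))).mono
    (image_mono (subset_Icc_csInf_csSup hC.bddBelow hC.bddAbove))

lemma exists_lipschitzOnWith_sOf_rpow (hN : 1 < N) (hh : IsMCPDensity K N h) {a b c : ℝ}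
    (hc : c ∈ densSupport h) (hcab : c ∉ Icc a b) (habS : Icc a b ⊆ densSupport h)
    (hpos : ∀ w ∈ Icc a b, 0 < h w) :
    ∃ L : NNReal, ∃ m > 0,
      LipschitzOnWith L (fun w => sOf (K / (N - 1)) |c - w| ^ (N - 1)) (Icc a b) ∧
        ∀ w ∈ Icc a b, m ≤ sOf (K / (N - 1)) |c - w| ^ (N - 1) := by
  have hne : ∀ w ∈ Icc a b, w ≠ c := fun w hw hwc => hcab (hwc ▸ hw)
  have hs : ∀ w ∈ Icc a b, 0 < sOf (K / (N - 1)) |c - w| := fun w hw =>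
    sOf_pos (abs_pos.2 (sub_ne_zero.2 (hne w hw).symm))
      (hh.mul_sq_lt_pi_sq hN (habS hw) hc (hpos w hw))
  have hcd : ContDiffOn ℝ 1 (fun w => sOf (K / (N - 1)) |c - w| ^ (N - 1)) (Icc a b) :=
    fun w hw => (contDiffAt_sOf_abs_sub_rpow (hne w hw) (hs w hw)).contDiffWithinAt
  obtain ⟨L, hL⟩ := hcd.exists_lipschitzOnWith one_ne_zero (convex_Icc _ _) isCompact_Icc
  obtain ⟨m, hm, hmle⟩ := isCompact_Icc.exists_forall_le' hcd.continuousOn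
    fun w hw => Real.rpow_pos_of_pos (hs w hw) _
  exact ⟨L, m, hm, hL, hmle⟩

lemma exists_lipschitzOnWith (hN : 1 < N) (hh : IsMCPDensity K N h) {x : ℝ}
    (hx : x ∈ interior (densSupport h)) :
    ∃ t ∈ 𝓝 x, ∃ L : NNReal, LipschitzOnWith L h t := by
  obtain ⟨ε, hε, hsub⟩ := exists_Icc_subset_of_mem_interior hx
  set J := Icc (x - ε / 2) (x + ε / 2)
  have hJ : J ⊆ Ioo (x - ε) (x + ε) := Icc_subset_Ioo (by linarith) (by linarith)
  have hu : x - ε ∈ densSupport h := hsub ⟨le_rfl, by linarith⟩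
  have hv : x + ε ∈ densSupport h := hsub ⟨by linarith, le_rfl⟩
  have hJS : J ⊆ densSupport h := hJ.trans (Ioo_subset_Icc_self.trans hsub)
  have hpos : ∀ w ∈ J, 0 < h w := fun w hw => hh.pos_of_mem_Ioo hN hu hv (hJ hw)
  obtain ⟨LA, mA, hmA, hA, hAm⟩ :=
    hh.exists_lipschitzOnWith_sOf_rpow hN hv (fun hvJ => by linarith [hvJ.2]) hJS hpos
  obtain ⟨LB, mB, hmB, hB, hBm⟩ :=
    hh.exists_lipschitzOnWith_sOf_rpow hN hu (fun huJ => by linarith [huJ.1]) hJS hpos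
  obtain ⟨M, hM⟩ := hh.bddAbove_image_of_isCompact hN isCompact_Icc hJS
  refine ⟨J, Icc_mem_nhds (by linarith) (by linarith),
    exists_lipschitzOnWith_of_mul_le_mul (lt_min hmA hmB) (hA.weaken (le_max_left LA LB))
      (hB.weaken (le_max_right LA LB)) (fun w hw => (min_le_left _ _).trans (hAm w hw))
      (fun w hw => (min_le_right _ _).trans (hBm w hw))
      (fun w hw => ⟨hh.1 w, hM (mem_image_of_mem h hw)⟩) ?_ ?_⟩
  · intro w hw w' hw' hww'
    exact hh.sOf_rpow_mul_le hN (hJS hw) hv (hpos w hw) (Icc_subset_uIcc ⟨hww', (hJ hw').2.le⟩)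
  · intro w hw w' hw' hww'
    exact hh.sOf_rpow_mul_le hN (hJS hw') hu (hpos w' hw')
      (uIcc_comm w' _ ▸ Icc_subset_uIcc ⟨(hJ hw).1.le, hww'⟩)

lemma continuousOn_interior (hN : 1 < N) (hh : IsMCPDensity K N h) :
    ContinuousOn h (interior (densSupport h)) := fun _ hx =>
  let ⟨_, ht, _, hL⟩ := hh.exists_lipschitzOnWith hN hx
  (hL.continuousOn.continuousAt ht).continuousWithinAt

lemma div_sOf_rpow_le (hN : 1 < N) (hh : IsMCPDensity K N h) {c z' : ℝ}
    (hc : c ∈ densSupport h) (hz : z ∈ densSupport h) (hpos : 0 < h z) (hz' : z' ∈ uIcc z c)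
    (hz'c : z' ≠ c) :
    h z / sOf (K / (N - 1)) |c - z| ^ (N - 1) ≤ h z' / sOf (K / (N - 1)) |c - z'| ^ (N - 1) := by
  have hzc : z ≠ c := by rintro rfl; simp_all
  rw [div_le_div_iff₀ (hh.sOf_rpow_pos hN hz hc hpos left_mem_uIcc hzc)
    (hh.sOf_rpow_pos hN hz hc hpos hz' hz'c), mul_comm (h z), mul_comm (h z')]
  exact hh.sOf_rpow_mul_le hN hz hc hpos hz'

lemma monotoneOn_div_sOf_rpow (hN : 1 < N) (hh : IsMCPDensity K N h) {a c : ℝ}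
    (ha : a ∈ densSupport h) (hc : c ∈ densSupport h) :
    MonotoneOn (fun z => h z / sOf (K / (N - 1)) |c - z| ^ (N - 1)) (Ioo a c) :=
  fun _ hz _ hz' hzz' => hh.div_sOf_rpow_le hN hc
    ((hh.ordConnected_densSupport hN).out ha hc (Ioo_subset_Icc_self hz))
    (hh.pos_of_mem_Ioo hN ha hc hz) (Icc_subset_uIcc ⟨hzz', hz'.2.le⟩) hz'.2.ne

lemma antitoneOn_div_sOf_rpow (hN : 1 < N) (hh : IsMCPDensity K N h) {b c : ℝ}
    (hc : c ∈ densSupport h) (hb : b ∈ densSupport h) :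
    AntitoneOn (fun z => h z / sOf (K / (N - 1)) |c - z| ^ (N - 1)) (Ioo c b) :=
  fun _ hz _ hz' hzz' => hh.div_sOf_rpow_le hN hc
    ((hh.ordConnected_densSupport hN).out hc hb (Ioo_subset_Icc_self hz'))
    (hh.pos_of_mem_Ioo hN hc hb hz') (uIcc_comm c _ ▸ Icc_subset_uIcc ⟨hz.1.le, hzz'⟩) hz.1.ne'

lemma exists_tendsto_nhdsWithin_interior (hN : 1 < N) (hh : IsMCPDensity K N h) {x : ℝ}
    (hx : x ∈ densSupport h) : ∃ L, Tendsto h (𝓝[interior (densSupport h)] x) (𝓝 L) := by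
  by_cases hxi : x ∈ interior (densSupport h)
  · exact ⟨h x, hh.continuousOn_interior hN x hxi⟩
  rcases (interior (densSupport h)).eq_empty_or_nonempty with hempty | ⟨c, hc⟩
  · exact ⟨0, by simp [hempty]⟩
  have hcS : c ∈ densSupport h := interior_subset hc
  have hord := hh.ordConnected_densSupport hN
  have hA : ContinuousAt (fun z => sOf (K / (N - 1)) |c - z| ^ (N - 1)) x :=
    (((contDiff_sOf _ (n := 0)).continuous.comp (continuous_const.sub continuous_id).abs
      ).rpow_const fun _ => Or.inr (by linarith)).continuousAt
  have hApos : ∀ {a b}, a ∈ densSupport h → b ∈ densSupport h → ∀ z ∈ Ioo a b, z ≠ c →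
      0 < sOf (K / (N - 1)) |c - z| ^ (N - 1) := fun ha hb z hz hzc =>
    hh.sOf_rpow_pos hN (hord.out ha hb (Ioo_subset_Icc_self hz)) hcS
      (hh.pos_of_mem_Ioo hN ha hb hz) left_mem_uIcc hzc
  have hside : ∀ z ∈ interior (densSupport h), x ∉ uIcc z c := fun z hz hxz =>
    hxi (hord.interior.uIcc_subset hz hc hxz)
  rcases (show x ≠ c by rintro rfl; exact hxi hc).lt_or_gt with hxc | hcx
  · obtain ⟨L, hL⟩ := exists_tendsto_nhdsGT_of_monotoneOn_div hxc (fun z _ => hh.1 z)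
      (fun z hz => hApos hx hcS z hz hz.2.ne) hA (hh.monotoneOn_div_sOf_rpow hN hx hcS)
    exact ⟨L, hL.mono_left (nhdsWithin_mono _ fun z hz =>
      not_le.1 fun hzx => hside z hz (Icc_subset_uIcc ⟨hzx, hxc.le⟩))⟩
  · obtain ⟨L, hL⟩ := exists_tendsto_nhdsLT_of_antitoneOn_div hcx (fun z _ => hh.1 z)
      (fun z hz => hApos hcS hx z hz hz.1.ne') hA (hh.antitoneOn_div_sOf_rpow hN hcS hx)
    exact ⟨L, hL.mono_left (nhdsWithin_mono _ fun z hz =>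
      not_le.1 fun hxz => hside z hz (uIcc_comm c z ▸ Icc_subset_uIcc ⟨hcx.le, hxz⟩))⟩

lemma exists_continuousOn_extension (hN : 1 < N) (hh : IsMCPDensity K N h) :
    ∃ h' : ℝ → ℝ, (∀ x, 0 ≤ h' x) ∧
      (∀ x, x ∉ densSupport h \ interior (densSupport h) → h' x = h x) ∧
      ContinuousOn h' (densSupport h) := by
  classical
  have hclosure : closure (interior (densSupport h)) ⊆ densSupport h :=
    closure_minimal interior_subset (isClosed_densSupport h)
  have hlim := fun x (hx : x ∈ densSupport h) => hh.exists_tendsto_nhdsWithin_interior hN hx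
  -- `extendFrom` is a junk limit off `closure (interior (densSupport h))`; keep `h` there
  refine ⟨(closure (interior (densSupport h))).piecewise
    (extendFrom (interior (densSupport h)) h) h, fun x => ?_, fun x hx => ?_, ?_⟩
  · by_cases hx : x ∈ closure (interior (densSupport h))
    · rw [piecewise_eq_of_mem _ _ _ hx]
      have := mem_closure_iff_nhdsWithin_neBot.1 hx
      exact ge_of_tendsto (tendsto_extendFrom (hlim x (hclosure hx))) (Eventually.of_forall hh.1)
    · rw [piecewise_eq_of_notMem _ _ _ hx]
      exact hh.1 x
  · by_cases hxi : x ∈ interior (densSupport h)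
    · rw [piecewise_eq_of_mem _ _ _ (subset_closure hxi)]
      exact extendFrom_extends (hh.continuousOn_interior hN) x hxi
    · exact piecewise_eq_of_notMem _ _ _ fun hcl => hx ⟨hclosure hcl, hxi⟩
  · rcases (densSupport h).subsingleton_or_nontrivial with hsub | hnt
    · exact hsub.continuousOn _
    have hS := (hh.ordConnected_densSupport hN).subset_closure_interior hnt
    exact (continuousOn_extendFrom hS hlim).congr fun x hx => piecewise_eq_of_mem _ _ _ (hS hx)

end IsMCPDensity

/-- Regularity of `MCP(K,N)` densities: the support is a closed interval,
`h` is bounded above on compact subsets of the support, positive and locally Lipschitz on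
the interior of the support, and can be modified at the (at most two) endpoints of the
support so as to become continuous on the support. -/
theorem mcp_density_regularity (K N : ℝ) (hN : 1 < N) (h : ℝ → ℝ)
    (hh : IsMCPDensity K N h) :
    (IsClosed (densSupport h) ∧ (densSupport h).OrdConnected) ∧
    (∀ C : Set ℝ, IsCompact C → C ⊆ densSupport h → BddAbove (h '' C)) ∧
    (∀ x ∈ interior (densSupport h), 0 < h x) ∧
    (∀ x ∈ interior (densSupport h), ∃ t ∈ nhds x, ∃ L : NNReal, LipschitzOnWith L h t) ∧
    (∃ h' : ℝ → ℝ, (∀ x, 0 ≤ h' x) ∧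
      (∀ x, x ∉ densSupport h \ interior (densSupport h) → h' x = h x) ∧
      ContinuousOn h' (densSupport h)) :=
  ⟨⟨isClosed_densSupport h, hh.ordConnected_densSupport hN⟩,
    fun _ hC hCS => hh.bddAbove_image_of_isCompact hN hC hCS,
    fun _ hx => hh.pos_of_mem_interior hN hx,
    fun _ hx => hh.exists_lipschitzOnWith hN hx,
    hh.exists_continuousOn_extension hN⟩
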